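/- Let γ > 1 and 0 < a ≤ b < ∞. There exist positive constants c₁, c₂ (depending only on γ, a, b) such that for every ρ ≥ 0 and every r ∈ [a,b]: c₁(|ρ−r|²·1_{|ρ−r|<1} + |ρ−r|^γ·1_{|ρ−r|≥1}) ≤ H(ρ|r) ≤ c₂(|ρ−r|²·1_{|ρ−r|<1} + |ρ−r|^γ·1_{|ρ−r|≥1}). -/
import Mathlib

open Real

private lemma tangent_ge {p x y : ℝ} (hp : 1 ≤ p) (hx : 0 < x) (hy : 0 ≤ y) :
    x ^ p + p * x ^ (p - 1) * (y - x) ≤ y ^ p := by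
  have hd : 0 ≤ y / x := div_nonneg hy hx.le
  have h := one_add_mul_self_le_rpow_one_add (s := y / x - 1) (by linarith) hp
  rw [show (1 : ℝ) + (y / x - 1) = y / x by ring, Real.div_rpow hy hx.le] at h
  have hxp : 0 < x ^ p := Real.rpow_pos_of_pos hx p
  have h2 : x ^ p * (1 + p * (y / x - 1)) ≤ y ^ p := by
    have h3 := mul_le_mul_of_nonneg_left h hxp.le
    calc x ^ p * (1 + p * (y / x - 1)) ≤ x ^ p * (y ^ p / x ^ p) := h3
      _ = y ^ p := by field_simp
  have h3 : x ^ p * (1 + p * (y / x - 1)) = x ^ p + p * x ^ (p - 1) * (y - x) := by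
    rw [Real.rpow_sub_one hx.ne']
    field_simp
  linarith [h3 ▸ h2]

private lemma tangent_le {p x y : ℝ} (hp0 : 0 ≤ p) (hp : p ≤ 1) (hx : 0 < x) (hy : 0 ≤ y) :
    y ^ p ≤ x ^ p + p * x ^ (p - 1) * (y - x) := by
  have hd : 0 ≤ y / x := div_nonneg hy hx.le
  have h := rpow_one_add_le_one_add_mul_self (s := y / x - 1) (by linarith) hp0 hp
  rw [show (1 : ℝ) + (y / x - 1) = y / x by ring, Real.div_rpow hy hx.le] at h
  have hxp : 0 < x ^ p := Real.rpow_pos_of_pos hx p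
  have h2 : y ^ p ≤ x ^ p * (1 + p * (y / x - 1)) := by
    have h3 := mul_le_mul_of_nonneg_left h hxp.le
    calc y ^ p = x ^ p * (y ^ p / x ^ p) := by field_simp
      _ ≤ x ^ p * (1 + p * (y / x - 1)) := h3
  have h3 : x ^ p * (1 + p * (y / x - 1)) = x ^ p + p * x ^ (p - 1) * (y - x) := by
    rw [Real.rpow_sub_one hx.ne']
    field_simp
  linarith [h3 ▸ h2]

-- superadditivity of rpow for exponent ≥ 1
private lemma superadd {q r u : ℝ} (hq : 1 ≤ q) (hr : 0 < r) (hu : 0 < u) :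
    r ^ q + u ^ q ≤ (r + u) ^ q := by
  have hs : 0 < r + u := by linarith
  have h1 : (r / (r + u)) ^ q ≤ r / (r + u) := by
    calc (r / (r + u)) ^ q ≤ (r / (r + u)) ^ (1 : ℝ) :=
          Real.rpow_le_rpow_of_exponent_ge (by positivity)
            (by rw [div_le_one hs]; linarith) hq
      _ = r / (r + u) := Real.rpow_one _
  have h2 : (u / (r + u)) ^ q ≤ u / (r + u) := by
    calc (u / (r + u)) ^ q ≤ (u / (r + u)) ^ (1 : ℝ) :=
          Real.rpow_le_rpow_of_exponent_ge (by positivity)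
            (by rw [div_le_one hs]; linarith) hq
      _ = u / (r + u) := Real.rpow_one _
  rw [Real.div_rpow hr.le hs.le] at h1
  rw [Real.div_rpow hu.le hs.le] at h2
  have hsq : 0 < (r + u) ^ q := Real.rpow_pos_of_pos hs q
  have hsum : r ^ q / (r + u) ^ q + u ^ q / (r + u) ^ q ≤ 1 := by
    have : r / (r + u) + u / (r + u) = 1 := by field_simp
    linarith
  have := mul_le_mul_of_nonneg_left hsum hsq.le
  calc r ^ q + u ^ q
      = (r + u) ^ q * (r ^ q / (r + u) ^ q + u ^ q / (r + u) ^ q) := by field_simp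
    _ ≤ (r + u) ^ q * 1 := this
    _ = (r + u) ^ q := by ring

-- L1: Lipschitz-type bound in product form
private lemma lip_bound {γ a b x r : ℝ} (hγ : 1 < γ) (ha : 0 < a) (hab : a ≤ b)
    (hx0 : 0 ≤ x) (hx1 : x ≤ b + 1) (hra : a ≤ r) (hrb : r ≤ b) :
    (x - r) * (x ^ (γ-1) - r ^ (γ-1)) ≤
      ((γ-1) * (b+1) ^ (γ-2) + (γ-1) * (a/2) ^ (γ-2) + 2 * b ^ (γ-1) / a) * (x - r) ^ 2 := by
  have hr0 : 0 < r := lt_of_lt_of_le ha hra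
  have hb0 : 0 < b := lt_of_lt_of_le ha hab
  have e2 : γ - 2 = (γ - 1) - 1 := by ring
  rw [e2]
  obtain ⟨q, hq, hqeq⟩ : ∃ q : ℝ, 0 < q ∧ γ - 1 = q := ⟨γ - 1, by linarith, rfl⟩
  rw [hqeq]
  have hT1 : (0:ℝ) ≤ q * (b+1) ^ (q-1) := by positivity
  have hT2 : (0:ℝ) ≤ q * (a/2) ^ (q-1) := by positivity
  have hT3 : (0:ℝ) ≤ 2 * b ^ q / a := by positivity
  rcases le_total r x with hle | hle
  · -- r ≤ x, both factors nonneg; x ≥ r > 0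
    have hx0' : 0 < x := lt_of_lt_of_le hr0 hle
    have key : x ^ q - r ^ q ≤ (q * (b+1) ^ (q-1) + q * (a/2) ^ (q-1) + 2 * b ^ q / a) * (x - r) := by
      rcases le_total 1 q with hq1 | hq1
      · have ht := tangent_ge (p := q) hq1 hx0' hr0.le
        -- x^q + q x^(q-1) (r - x) ≤ r^q  ⟹ x^q - r^q ≤ q x^(q-1) (x - r)
        have hmono : x ^ (q-1) ≤ (b+1) ^ (q-1) :=
          Real.rpow_le_rpow hx0 hx1 (by linarith)
        have hp1 := mul_le_mul_of_nonneg_left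
          (mul_le_mul_of_nonneg_right hmono (show (0:ℝ) ≤ x - r by linarith)) hq.le
        linarith [hp1, mul_nonneg hT2 (show (0:ℝ) ≤ x - r by linarith),
          mul_nonneg hT3 (show (0:ℝ) ≤ x - r by linarith)]
      · have ht := tangent_le (p := q) hq.le hq1 hr0 hx0
        -- x^q ≤ r^q + q r^(q-1)(x - r)
        have hmono : r ^ (q-1) ≤ (a/2) ^ (q-1) :=
          Real.rpow_le_rpow_of_nonpos (by linarith) (by linarith) (by linarith)
        have hp1 := mul_le_mul_of_nonneg_left
          (mul_le_mul_of_nonneg_right hmono (show (0:ℝ) ≤ x - r by linarith)) hq.le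
        linarith [hp1, mul_nonneg hT1 (show (0:ℝ) ≤ x - r by linarith),
          mul_nonneg hT3 (show (0:ℝ) ≤ x - r by linarith)]
    have := mul_le_mul_of_nonneg_left key (show (0:ℝ) ≤ x - r by linarith)
    nlinarith [this]
  · -- x ≤ r
    have key : r ^ q - x ^ q ≤ (q * (b+1) ^ (q-1) + q * (a/2) ^ (q-1) + 2 * b ^ q / a) * (r - x) := by
      rcases le_total 1 q with hq1 | hq1
      · have ht := tangent_ge (p := q) hq1 hr0 hx0
        -- r^q + q r^(q-1)(x - r) ≤ x^q
        have hmono : r ^ (q-1) ≤ (b+1) ^ (q-1) :=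
          Real.rpow_le_rpow hr0.le (by linarith) (by linarith)
        have hp1 := mul_le_mul_of_nonneg_left
          (mul_le_mul_of_nonneg_right hmono (show (0:ℝ) ≤ r - x by linarith)) hq.le
        linarith [hp1, mul_nonneg hT2 (show (0:ℝ) ≤ r - x by linarith),
          mul_nonneg hT3 (show (0:ℝ) ≤ r - x by linarith)]
      · rcases le_total (a/2) x with hax | hax
        · have hx0' : 0 < x := by linarith
          have ht := tangent_le (p := q) hq.le hq1 hx0' hr0.le
          -- r^q ≤ x^q + q x^(q-1)(r - x)
          have hmono : x ^ (q-1) ≤ (a/2) ^ (q-1) :=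
            Real.rpow_le_rpow_of_nonpos (by linarith) hax (by linarith)
          have hp1 := mul_le_mul_of_nonneg_left
            (mul_le_mul_of_nonneg_right hmono (show (0:ℝ) ≤ r - x by linarith)) hq.le
          linarith [hp1, mul_nonneg hT1 (show (0:ℝ) ≤ r - x by linarith),
            mul_nonneg hT3 (show (0:ℝ) ≤ r - x by linarith)]
        · -- x ≤ a/2, so r - x ≥ a/2
          have h1 : r ^ q ≤ b ^ q := Real.rpow_le_rpow hr0.le hrb hq.le
          have h2 : 0 ≤ x ^ q := Real.rpow_nonneg hx0 q
          have h3 : a / 2 ≤ r - x := by linarith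
          have h4 : 2 * b ^ q / a * (a/2) ≤ 2 * b ^ q / a * (r - x) :=
            mul_le_mul_of_nonneg_left h3 hT3
          have h5 : 2 * b ^ q / a * (a/2) = b ^ q := by field_simp
          nlinarith [mul_nonneg hT1 (show (0:ℝ) ≤ r - x by linarith),
            mul_nonneg hT2 (show (0:ℝ) ≤ r - x by linarith)]
    have := mul_le_mul_of_nonneg_left key (show (0:ℝ) ≤ r - x by linarith)
    nlinarith [this]

-- L2: reverse Lipschitz on a compact interval
private lemma rev_lip {q α β x y : ℝ} (hq : 0 < q) (hα : 0 < α) (hy : α ≤ y)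
    (hyx : y ≤ x) (hx : x ≤ β) :
    q * min (α ^ (q - 1)) (β ^ (q - 1)) * (x - y) ≤ x ^ q - y ^ q := by
  have hy0 : 0 < y := lt_of_lt_of_le hα hy
  have hx0 : 0 < x := lt_of_lt_of_le hy0 hyx
  have hxy : (0:ℝ) ≤ x - y := by linarith
  rcases le_total 1 q with hq1 | hq1
  · have ht := tangent_ge (p := q) hq1 hy0 hx0.le
    -- y^q + q y^(q-1)(x - y) ≤ x^q
    have hmono : α ^ (q - 1) ≤ y ^ (q - 1) := Real.rpow_le_rpow hα.le hy (by linarith)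
    have hmin : min (α ^ (q - 1)) (β ^ (q - 1)) ≤ y ^ (q - 1) :=
      le_trans (min_le_left _ _) hmono
    have hp1 := mul_le_mul_of_nonneg_left (mul_le_mul_of_nonneg_right hmin hxy) hq.le
    linarith [hp1]
  · have ht := tangent_le (p := q) hq.le hq1 hx0 hy0.le
    -- y^q ≤ x^q + q x^(q-1)(y - x)
    have hmono : β ^ (q - 1) ≤ x ^ (q - 1) :=
      Real.rpow_le_rpow_of_nonpos hx0 hx (by linarith)
    have hmin : min (α ^ (q - 1)) (β ^ (q - 1)) ≤ x ^ (q - 1) :=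
      le_trans (min_le_right _ _) hmono
    have hp1 := mul_le_mul_of_nonneg_left (mul_le_mul_of_nonneg_right hmin hxy) hq.le
    linarith [hp1]

-- L3: growth bound for large increments
private lemma grow_bound {q b r u : ℝ} (hq : 0 < q) (hb : 0 < b) (hr0 : 0 < r)
    (hrb : r ≤ b) (hu : 1/2 ≤ u) :
    min 1 (q * (2*b+1) ^ (q - 1)) * u ^ q ≤ (r + u) ^ q - r ^ q := by
  have hu0 : 0 < u := by linarith
  have huq : 0 ≤ u ^ q := Real.rpow_nonneg hu0.le q
  rcases le_total 1 q with hq1 | hq1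
  · have h := superadd hq1 hr0 hu0
    have : min 1 (q * (2*b+1) ^ (q - 1)) * u ^ q ≤ 1 * u ^ q :=
      mul_le_mul_of_nonneg_right (min_le_left _ _) huq
    linarith [this, h]
  · have hs : 0 < r + u := by linarith
    have ht := tangent_le (p := q) hq.le hq1 hs hr0.le
    -- r^q ≤ (r+u)^q + q (r+u)^(q-1) * (r - (r+u))
    have hle : r + u ≤ (2*b+1) * u := by nlinarith
    have hmono : ((2*b+1) * u) ^ (q - 1) ≤ (r + u) ^ (q - 1) :=
      Real.rpow_le_rpow_of_nonpos hs hle (by linarith)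
    have hsplit : ((2*b+1) * u) ^ (q - 1) = (2*b+1) ^ (q - 1) * u ^ (q - 1) :=
      Real.mul_rpow (by linarith) hu0.le
    have huu : u ^ (q - 1) * u = u ^ q := by
      rw [Real.rpow_sub_one hu0.ne']; field_simp
    -- (r+u)^q - r^q ≥ q * u * (r+u)^(q-1) ≥ q * u * (2b+1)^(q-1) u^(q-1) = q (2b+1)^(q-1) u^q
    have h1 : q * (u * ((2*b+1) * u) ^ (q - 1)) ≤ q * (u * (r + u) ^ (q - 1)) :=
      mul_le_mul_of_nonneg_left (mul_le_mul_of_nonneg_left hmono hu0.le) hq.le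
    have h2 : q * (u * ((2*b+1) * u) ^ (q - 1)) = q * (2*b+1) ^ (q - 1) * u ^ q := by
      rw [hsplit, ← huu]; ring
    have h3 : min 1 (q * (2*b+1) ^ (q - 1)) * u ^ q ≤ (q * (2*b+1) ^ (q - 1)) * u ^ q :=
      mul_le_mul_of_nonneg_right (min_le_right _ _) huq
    linarith [h1, h3]

private lemma D_upper {γ ρ r : ℝ} (hγ : 1 < γ) (hρ : 0 ≤ ρ) (hr : 0 < r) :
    ρ ^ γ - r ^ γ - γ * r ^ (γ-1) * (ρ - r) ≤ γ * (ρ - r) * (ρ ^ (γ-1) - r ^ (γ-1)) := by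
  rcases eq_or_lt_of_le hρ with h0 | hρ0
  · have hz : (0:ℝ) ^ γ = 0 := Real.zero_rpow (by linarith)
    have hz1 : (0:ℝ) ^ (γ-1) = 0 := Real.zero_rpow (by linarith)
    have hrr : r ^ (γ-1) * r = r ^ γ := by rw [Real.rpow_sub_one hr.ne']; field_simp
    have hrγ : 0 ≤ r ^ γ := Real.rpow_nonneg hr.le γ
    rw [← h0, hz, hz1]
    nlinarith [hrr, hrγ]
  · have ht := tangent_ge (p := γ) hγ.le hρ0 hr.le
    nlinarith [ht]

private lemma D_lower {γ ρ r : ℝ} (hγ : 1 < γ) (hρ : 0 ≤ ρ) (hr : 0 < r) :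
    γ * (ρ - (ρ+r)/2) * (((ρ+r)/2) ^ (γ-1) - r ^ (γ-1)) ≤
      ρ ^ γ - r ^ γ - γ * r ^ (γ-1) * (ρ - r) := by
  have hm : 0 < (ρ+r)/2 := by linarith
  have ht1 := tangent_ge (p := γ) hγ.le hm hρ
  have ht2 := tangent_ge (p := γ) hγ.le hr hm.le
  nlinarith [ht1, ht2]

noncomputable def Hrel (γ ρ r : ℝ) : ℝ :=
  ρ ^ γ / (γ - 1) - γ * (ρ - r) * r ^ (γ - 1) / (γ - 1) - r ^ γ / (γ - 1)

theorem relative_entropy_two_sided_bound (γ a b : ℝ) (hγ : 1 < γ)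
    (ha : 0 < a) (hab : a ≤ b) :
    ∃ c₁ c₂ : ℝ, 0 < c₁ ∧ 0 < c₂ ∧
      ∀ ρ : ℝ, 0 ≤ ρ → ∀ r : ℝ, r ∈ Set.Icc a b →
        c₁ * (if |ρ - r| < 1 then |ρ - r| ^ 2 else |ρ - r| ^ γ) ≤ Hrel γ ρ r ∧
        Hrel γ ρ r ≤ c₂ * (if |ρ - r| < 1 then |ρ - r| ^ 2 else |ρ - r| ^ γ) := by
  have hγ0 : (0:ℝ) < γ - 1 := by linarith
  have hb0 : (0:ℝ) < b := lt_of_lt_of_le ha hab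
  have hγpos : (0:ℝ) < γ := by linarith
  have hK2pos : (0:ℝ) < (γ-1) * min ((a/2) ^ (γ-1-1)) ((b+1/2) ^ (γ-1-1)) :=
    mul_pos hγ0 (lt_min (Real.rpow_pos_of_pos (by linarith) _)
      (Real.rpow_pos_of_pos (by linarith) _))
  have hK3pos : (0:ℝ) < min 1 ((γ-1) * (2*b+1) ^ (γ-1-1)) :=
    lt_min one_pos (mul_pos hγ0 (Real.rpow_pos_of_pos (by linarith) _))
  have hK1pos : (0:ℝ) < (γ-1) * (b+1) ^ (γ-2) + (γ-1) * (a/2) ^ (γ-2) + 2 * b ^ (γ-1) / a := by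
    have i1 : (0:ℝ) < (γ-1) * (b+1) ^ (γ-2) :=
      mul_pos hγ0 (Real.rpow_pos_of_pos (by linarith) _)
    have i2 : (0:ℝ) < (γ-1) * (a/2) ^ (γ-2) :=
      mul_pos hγ0 (Real.rpow_pos_of_pos (by linarith) _)
    have i3 : (0:ℝ) < 2 * b ^ (γ-1) / a :=
      div_pos (by positivity) ha
    linarith
  have h2γ : (0:ℝ) < (2:ℝ) ^ γ := Real.rpow_pos_of_pos two_pos γ
  have hbq : (0:ℝ) < b ^ (γ-1) := Real.rpow_pos_of_pos hb0 _
  refine ⟨min (γ * ((γ-1) * min ((a/2) ^ (γ-1-1)) ((b+1/2) ^ (γ-1-1))) / 4)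
      (min (γ * (min 1 ((γ-1) * (2*b+1) ^ (γ-1-1))) / (2:ℝ) ^ γ)
        (γ * ((γ-1) * min ((a/2) ^ (γ-1-1)) ((b+1/2) ^ (γ-1-1))) / (4 * b ^ (γ-1)))) / (γ-1),
    (γ * ((γ-1) * (b+1) ^ (γ-2) + (γ-1) * (a/2) ^ (γ-2) + 2 * b ^ (γ-1) / a)
      + γ * (b+1) ^ (γ-1)) / (γ-1), ?_, ?_, ?_⟩
  · apply div_pos _ hγ0
    exact lt_min (by positivity) (lt_min (by positivity) (by positivity))
  · apply div_pos _ hγ0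
    have h4 : (0:ℝ) < (b+1) ^ (γ-1) := Real.rpow_pos_of_pos (by linarith) _
    positivity
  obtain ⟨K1, hK1⟩ : ∃ K1:ℝ,
      (γ-1) * (b+1) ^ (γ-2) + (γ-1) * (a/2) ^ (γ-2) + 2 * b ^ (γ-1) / a = K1 := ⟨_, rfl⟩
  obtain ⟨K2, hK2⟩ : ∃ K2:ℝ,
      (γ-1) * min ((a/2) ^ (γ-1-1)) ((b+1/2) ^ (γ-1-1)) = K2 := ⟨_, rfl⟩
  obtain ⟨K3, hK3⟩ : ∃ K3:ℝ, min 1 ((γ-1) * (2*b+1) ^ (γ-1-1)) = K3 := ⟨_, rfl⟩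
  rw [hK1] at hK1pos
  rw [hK2] at hK2pos
  rw [hK3] at hK3pos
  rw [hK1, hK2, hK3]
  obtain ⟨Bq, hBq⟩ : ∃ Bq:ℝ, (b+1) ^ (γ-1) = Bq := ⟨_, rfl⟩
  rw [hBq]
  have hBqpos : (0:ℝ) < Bq := hBq ▸ Real.rpow_pos_of_pos (by linarith) _
  intro ρ hρ r hmem
  obtain ⟨hra, hrb⟩ := hmem
  have hr0 : (0:ℝ) < r := lt_of_lt_of_le ha hra
  have hH : Hrel γ ρ r = (ρ ^ γ - r ^ γ - γ * r ^ (γ-1) * (ρ - r)) / (γ-1) := by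
    unfold Hrel; ring
  have key : min (γ * K2 / 4) (min (γ * K3 / (2:ℝ) ^ γ) (γ * K2 / (4 * b ^ (γ-1))))
        * (if |ρ - r| < 1 then |ρ - r| ^ 2 else |ρ - r| ^ γ)
        ≤ ρ ^ γ - r ^ γ - γ * r ^ (γ-1) * (ρ - r) ∧
      ρ ^ γ - r ^ γ - γ * r ^ (γ-1) * (ρ - r) ≤
      (γ * K1 + γ * Bq) * (if |ρ - r| < 1 then |ρ - r| ^ 2 else |ρ - r| ^ γ) := by
    have hup := D_upper hγ hρ hr0
    have hlo := D_lower hγ hρ hr0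
    by_cases hlt : |ρ - r| < 1
    · rw [if_pos hlt, sq_abs]
      obtain ⟨habs1, habs2⟩ := abs_lt.mp hlt
      constructor
      · -- lower bound, near regime
        have hm_lb : a/2 ≤ (ρ+r)/2 := by linarith
        have hm_ub : (ρ+r)/2 ≤ b + 1/2 := by linarith
        have hmin_le : min (γ * K2 / 4) (min (γ * K3 / (2:ℝ) ^ γ) (γ * K2 / (4 * b ^ (γ-1))))
            ≤ γ * K2 / 4 := min_le_left _ _
        have hsq := mul_le_mul_of_nonneg_right hmin_le (sq_nonneg (ρ - r))
        rcases le_total r ρ with hcmp | hcmp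
        · have hrl := rev_lip (q := γ-1) hγ0 (half_pos ha) (show a/2 ≤ r by linarith)
            (show r ≤ (ρ+r)/2 by linarith) hm_ub
          rw [hK2] at hrl
          have hnn : (0:ℝ) ≤ γ * ((ρ-r)/2) := by
            apply mul_nonneg hγpos.le; linarith
          have hmul := mul_le_mul_of_nonneg_left hrl hnn
          linarith [hlo, hmul, hsq]
        · have hrl := rev_lip (q := γ-1) hγ0 (half_pos ha) hm_lb
            (show (ρ+r)/2 ≤ r by linarith) (show r ≤ b + 1/2 by linarith)
          rw [hK2] at hrl
          have hnn : (0:ℝ) ≤ γ * ((r-ρ)/2) := by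
            apply mul_nonneg hγpos.le; linarith
          have hmul := mul_le_mul_of_nonneg_left hrl hnn
          linarith [hlo, hmul, hsq]
      · -- upper bound, near regime
        have hlip := lip_bound hγ ha hab hρ (by linarith : ρ ≤ b + 1) hra hrb
        rw [hK1] at hlip
        have h2 := mul_le_mul_of_nonneg_left hlip hγpos.le
        have hextra : (0:ℝ) ≤ γ * Bq * (ρ-r)^2 := by positivity
        linarith [hup, h2, hextra]
    · rw [if_neg hlt]
      have hge : 1 ≤ |ρ - r| := le_of_not_gt hlt
      rcases le_total r ρ with hcmp | hcmp
      · -- ρ ≥ r, far regime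
        have habs : |ρ - r| = ρ - r := abs_of_nonneg (by linarith)
        rw [habs] at hge ⊢
        have hd0 : (0:ℝ) < ρ - r := by linarith
        have epow : (ρ-r) ^ (γ-1) * (ρ-r) = (ρ-r) ^ γ := by
          rw [Real.rpow_sub_one hd0.ne']; field_simp
        constructor
        · -- lower
          have hgb := grow_bound (q := γ-1) hγ0 hb0 hr0 hrb (show 1/2 ≤ (ρ-r)/2 by linarith)
          rw [show r + (ρ-r)/2 = (ρ+r)/2 by ring, hK3] at hgb
          have hnn : (0:ℝ) ≤ γ * ((ρ-r)/2) := by apply mul_nonneg hγpos.le; linarith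
          have hmul := mul_le_mul_of_nonneg_left hgb hnn
          have ediv : ((ρ-r)/2) ^ (γ-1) = (ρ-r) ^ (γ-1) / (2:ℝ) ^ (γ-1) :=
            Real.div_rpow hd0.le (by norm_num) _
          have e2γ : (2:ℝ) ^ (γ-1) = (2:ℝ) ^ γ / 2 := Real.rpow_sub_one (by norm_num) γ
          have echain : (γ * ((ρ-r)/2)) * (K3 * ((ρ-r)/2) ^ (γ-1))
              = γ * K3 / (2:ℝ) ^ γ * (ρ-r) ^ γ := by
            rw [ediv, e2γ, ← epow]; field_simp
          have hc1le : min (γ * K2 / 4) (min (γ * K3 / (2:ℝ) ^ γ) (γ * K2 / (4 * b ^ (γ-1))))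
              ≤ γ * K3 / (2:ℝ) ^ γ := le_trans (min_le_right _ _) (min_le_left _ _)
          have hfin := mul_le_mul_of_nonneg_right hc1le (Real.rpow_nonneg hd0.le γ)
          linarith [hlo, hmul, echain, hfin]
        · -- upper
          have hρle : ρ ≤ (b+1) * (ρ-r) := by
            have h := mul_le_mul_of_nonneg_left hge hb0.le
            linarith
          have h1 : ρ ^ (γ-1) ≤ ((b+1) * (ρ-r)) ^ (γ-1) :=
            Real.rpow_le_rpow hρ hρle (by linarith)
          have h2 : ((b+1) * (ρ-r)) ^ (γ-1) = (b+1) ^ (γ-1) * (ρ-r) ^ (γ-1) :=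
            Real.mul_rpow (by linarith) hd0.le
          have hrq : (0:ℝ) ≤ r ^ (γ-1) := Real.rpow_nonneg hr0.le _
          have h3 : ρ ^ (γ-1) - r ^ (γ-1) ≤ Bq * (ρ-r) ^ (γ-1) := by
            rw [h2, hBq] at h1; linarith
          have hmul := mul_le_mul_of_nonneg_left h3
            (show (0:ℝ) ≤ γ * (ρ-r) from mul_nonneg hγpos.le hd0.le)
          have heq : γ * (ρ-r) * (Bq * (ρ-r) ^ (γ-1)) = γ * Bq * (ρ-r) ^ γ := by
            rw [← epow]; ring
          have hK1nn : (0:ℝ) ≤ γ * K1 * (ρ-r) ^ γ :=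
            mul_nonneg (mul_nonneg hγpos.le hK1pos.le) (Real.rpow_nonneg hd0.le γ)
          linarith [hup, hmul, heq, hK1nn]
      · -- ρ ≤ r, far regime
        have habs : |ρ - r| = r - ρ := by rw [abs_sub_comm]; exact abs_of_nonneg (by linarith)
        rw [habs] at hge ⊢
        have hd0 : (0:ℝ) < r - ρ := by linarith
        have hdb : r - ρ ≤ b := by linarith
        have epow : (r-ρ) ^ (γ-1) * (r-ρ) = (r-ρ) ^ γ := by
          rw [Real.rpow_sub_one hd0.ne']; field_simp
        constructor
        · -- lower
          have hm_lb : a/2 ≤ (ρ+r)/2 := by linarith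
          have hrl := rev_lip (q := γ-1) hγ0 (half_pos ha) hm_lb
            (show (ρ+r)/2 ≤ r by linarith) (show r ≤ b + 1/2 by linarith)
          rw [hK2] at hrl
          have hnn : (0:ℝ) ≤ γ * ((r-ρ)/2) := by apply mul_nonneg hγpos.le; linarith
          have hmul := mul_le_mul_of_nonneg_left hrl hnn
          have hq1 : (r-ρ) ^ (γ-1) ≤ b ^ (γ-1) := Real.rpow_le_rpow hd0.le hdb (by linarith)
          have hsq : (r-ρ) ≤ (r-ρ)^2 := by
            have h := mul_le_mul_of_nonneg_left hge hd0.le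
            calc (r-ρ) = (r-ρ) * 1 := by ring
              _ ≤ (r-ρ) * (r-ρ) := h
              _ = (r-ρ)^2 := by ring
          have h6 : (r-ρ) ^ γ ≤ b ^ (γ-1) * (r-ρ)^2 := by
            calc (r-ρ) ^ γ = (r-ρ) ^ (γ-1) * (r-ρ) := epow.symm
              _ ≤ b ^ (γ-1) * (r-ρ)^2 :=
                mul_le_mul hq1 hsq hd0.le (Real.rpow_nonneg hb0.le _)
          have hc1le : min (γ * K2 / 4) (min (γ * K3 / (2:ℝ) ^ γ) (γ * K2 / (4 * b ^ (γ-1))))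
              ≤ γ * K2 / (4 * b ^ (γ-1)) := le_trans (min_le_right _ _) (min_le_right _ _)
          have hfin : min (γ * K2 / 4) (min (γ * K3 / (2:ℝ) ^ γ) (γ * K2 / (4 * b ^ (γ-1))))
              * (r-ρ) ^ γ ≤ γ * K2 / 4 * (r-ρ)^2 := by
            calc _ ≤ (γ * K2 / (4 * b ^ (γ-1))) * (b ^ (γ-1) * (r-ρ)^2) :=
                mul_le_mul hc1le h6 (Real.rpow_nonneg hd0.le γ) (by positivity)
              _ = γ * K2 / 4 * (r-ρ)^2 := by field_simp
          linarith [hlo, hmul, hfin]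
        · -- upper
          have hA : r ^ (γ-1) ≤ b ^ (γ-1) := Real.rpow_le_rpow hr0.le hrb (by linarith)
          have hρq : (0:ℝ) ≤ ρ ^ (γ-1) := Real.rpow_nonneg hρ _
          have h4 : r ^ (γ-1) - ρ ^ (γ-1) ≤ b ^ (γ-1) := by linarith
          have hmul := mul_le_mul_of_nonneg_left h4
            (show (0:ℝ) ≤ γ * (r-ρ) from mul_nonneg hγpos.le hd0.le)
          have hb1 : b ^ (γ-1) ≤ Bq := by
            rw [← hBq]; exact Real.rpow_le_rpow hb0.le (by linarith) (by linarith)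
          have hone : (1:ℝ) ≤ (r-ρ) ^ (γ-1) := by
            calc (1:ℝ) = 1 ^ (γ-1) := (Real.one_rpow _).symm
              _ ≤ (r-ρ) ^ (γ-1) := Real.rpow_le_rpow (by norm_num) hge (by linarith)
          have h5 : b ^ (γ-1) ≤ Bq * (r-ρ) ^ (γ-1) := by
            calc b ^ (γ-1) ≤ Bq := hb1
              _ = Bq * 1 := by ring
              _ ≤ Bq * (r-ρ) ^ (γ-1) := mul_le_mul_of_nonneg_left hone hBqpos.le
          have hmul2 := mul_le_mul_of_nonneg_left h5
            (show (0:ℝ) ≤ γ * (r-ρ) from mul_nonneg hγpos.le hd0.le)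
          have heq : γ * (r-ρ) * (Bq * (r-ρ) ^ (γ-1)) = γ * Bq * (r-ρ) ^ γ := by
            rw [← epow]; ring
          have hK1nn : (0:ℝ) ≤ γ * K1 * (r-ρ) ^ γ :=
            mul_nonneg (mul_nonneg hγpos.le hK1pos.le) (Real.rpow_nonneg hd0.le γ)
          linarith [hup, hmul, hmul2, heq, hK1nn]
  constructor
  · rw [hH, div_mul_eq_mul_div, div_le_div_iff_of_pos_right hγ0]
    exact key.1
  · rw [hH, div_mul_eq_mul_div, div_le_div_iff_of_pos_right hγ0]
    exact key.2
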